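/- Let H ⊂ C^{n+1} be a set such that 0 ∈ H and λZ ∈ H for every Z ∈ H and λ ∈ C*. If the closure of H is an analytic subvariety of C^{n+1} whose ideal of germs at 0 is generated by holomorphic functions h_1,…,h_m, then there exists j_0 such that the closure of H agrees, as a germ at 0, with the common zero set of the homogeneous Taylor components h_{kμ} of degree μ ≤ j_0 of the generators; in particular the germ of H̄ at 0 is the germ of an algebraic cone. -/

import Mathlib

/-!
Restricted to the disc `{c • Z : ‖c‖ < 1}` through a point `Z` of the closed cone `closure H`,
each `h_k` becomes the one-variable power series `∑ c ^ μ • h_{kμ}(Z)`, which vanishes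
identically; so every homogeneous component vanishes on `closure H`. Conversely, the ideals of
`ℂ[Z]` generated by the components of degree `≤ j` form an increasing chain, which stabilizes at
some `j₀` by Noetherianity; hence the vanishing of the components of degree `≤ j₀` at `Z` forces
that of all components, and so of every `h_k`.
-/

open MvPolynomial

theorem MvPolynomial.IsHomogeneous.eval_smul {R σ : Type*} [CommSemiring R]
    {p : MvPolynomial σ R} {μ : ℕ} (hp : p.IsHomogeneous μ) (c : R) (Z : σ → R) :
    eval (c • Z) p = c ^ μ * eval Z p := by
  rw [eval_eq, eval_eq, Finset.mul_sum]
  refine Finset.sum_congr rfl fun d hd => ?_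
  have hdeg : ∑ i ∈ d.support, d i = μ := by
    simpa [Finsupp.weight_apply, Finsupp.sum] using hp (mem_support_iff.mp hd)
  simp only [Pi.smul_apply, smul_eq_mul, mul_pow, Finset.prod_mul_distrib,
    Finset.prod_pow_eq_pow_sum, hdeg]
  ring

theorem eq_zero_of_forall_tsum_pow_mul_eq_zero {𝕜 : Type*} [RCLike 𝕜] {a : ℕ → 𝕜}
    (ha : Summable a) (h : ∀ c : 𝕜, ‖c‖ < 1 → ∑' μ, c ^ μ * a μ = 0) : a = 0 := by
  have hsum : ∀ c : 𝕜, ‖c‖ < 1 → HasSum (fun μ => c ^ μ * a μ) 0 := fun c hc =>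
    h c hc ▸ ((summable_norm_iff.mpr ha).of_norm_bounded fun μ => by
      rw [norm_mul, norm_pow]
      exact mul_le_of_le_one_left (norm_nonneg _) (pow_le_one₀ (norm_nonneg _) hc.le)).hasSum
  have hzero : HasFPowerSeriesAt 0 (FormalMultilinearSeries.ofScalars 𝕜 a) 0 :=
    hasFPowerSeriesAt_iff.mpr <|
      Filter.eventually_of_mem (Metric.ball_mem_nhds 0 one_pos) fun c hc => by
        simpa using hsum c (mem_ball_zero_iff.mp hc)
  exact (FormalMultilinearSeries.ofScalars_series_eq_zero 𝕜).mp hzero.eq_zero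

theorem smul_mem_closure_of_forall_smul_mem {𝕜 E : Type*} [Field 𝕜] [AddCommGroup E]
    [Module 𝕜 E] [TopologicalSpace E] [ContinuousConstSMul 𝕜 E] {H : Set E}
    (h0 : (0 : E) ∈ H) (hcone : ∀ Z ∈ H, ∀ c : 𝕜, c ≠ 0 → c • Z ∈ H)
    {Z : E} (hZ : Z ∈ closure H) (c : 𝕜) : c • Z ∈ closure H := by
  rcases eq_or_ne c 0 with rfl | hc
  · simpa using subset_closure h0
  · exact map_mem_closure (continuous_const_smul c) hZ fun w hw => hcone w hw c hc

theorem IsNoetherianRing.exists_forall_mem_of_forall_le_mem {R ι : Type*} [CommSemiring R]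
    [IsNoetherianRing R] (f : ι → ℕ → R) :
    ∃ j₀, ∀ I : Ideal R, (∀ k, ∀ μ ≤ j₀, f k μ ∈ I) → ∀ k μ, f k μ ∈ I := by
  let J : ℕ →o Ideal R :=
    ⟨fun j => Ideal.span {x | ∃ k, ∃ μ ≤ j, f k μ = x}, fun _ _ hij =>
      Ideal.span_mono fun _ ⟨k, μ, hμ, hx⟩ => ⟨k, μ, hμ.trans hij, hx⟩⟩
  obtain ⟨j₀, hj₀⟩ := monotone_stabilizes_iff_noetherian.mpr ‹_› J
  refine ⟨j₀, fun I hI k μ => ?_⟩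
  have hJ : J j₀ ≤ I := Ideal.span_le.mpr fun _ ⟨k, μ, hμ, hx⟩ => hx ▸ hI k μ hμ
  refine hJ ?_
  rw [hj₀ (max μ j₀) (le_max_right _ _)]
  exact Ideal.subset_span ⟨k, μ, le_max_left _ _, rfl⟩

theorem MvPolynomial.eval_eq_zero_of_forall_tsum_eval_smul_eq_zero {σ 𝕜 : Type*} [RCLike 𝕜]
    {p : ℕ → MvPolynomial σ 𝕜} (hp : ∀ μ, (p μ).IsHomogeneous μ) {Z : σ → 𝕜}
    (hs : Summable fun μ => eval Z (p μ))
    (h : ∀ c : 𝕜, ‖c‖ < 1 → ∑' μ, eval (c • Z) (p μ) = 0) (μ : ℕ) : eval Z (p μ) = 0 :=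
  congrFun (eq_zero_of_forall_tsum_pow_mul_eq_zero hs fun c hc => by
    simpa only [(hp _).eval_smul] using h c hc) μ

/-- Chow-type argument: let `H ⊂ ℂ^{n+1}` be a cone (`0 ∈ H`, stable under `ℂ*`-scaling)
whose closure is, near `0`, the common zero set of holomorphic functions
`h_k = Σ_μ (P k μ)` with homogeneous Taylor components `P k μ` of degree `μ`.
Then there is `j₀` such that, as a germ at `0`, the closure of `H` coincides with the
common zero set of the finitely many homogeneous components `P k μ`, `μ ≤ j₀`;
in particular the germ of `H̄` at `0` is the germ of an algebraic cone. -/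
theorem cone_germ_is_algebraic (n m : ℕ) (H : Set (Fin (n + 1) → ℂ))
    (h0 : (0 : Fin (n + 1) → ℂ) ∈ H)
    (hcone : ∀ Z ∈ H, ∀ c : ℂ, c ≠ 0 → c • Z ∈ H)
    (P : Fin m → ℕ → MvPolynomial (Fin (n + 1)) ℂ)
    (hhom : ∀ k μ, (P k μ).IsHomogeneous μ)
    (r : ℝ) (hr : 0 < r)
    (hsum : ∀ k : Fin m, ∀ Z ∈ Metric.ball (0 : Fin (n + 1) → ℂ) r,
      Summable (fun μ : ℕ => eval Z (P k μ)))
    (hvar : ∀ Z ∈ Metric.ball (0 : Fin (n + 1) → ℂ) r,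
      (Z ∈ closure H ↔ ∀ k : Fin m, ∑' μ : ℕ, eval Z (P k μ) = 0)) :
    ∃ j₀ : ℕ, ∃ ε > 0, ∀ Z ∈ Metric.ball (0 : Fin (n + 1) → ℂ) ε,
      (Z ∈ closure H ↔ ∀ k : Fin m, ∀ μ ≤ j₀, eval Z (P k μ) = 0) := by
  obtain ⟨j₀, hj₀⟩ := IsNoetherianRing.exists_forall_mem_of_forall_le_mem P
  refine ⟨j₀, r, hr, fun Z hZ => ⟨fun hZH k μ _ => ?_, fun hlow => (hvar Z hZ).2 fun k => ?_⟩⟩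
  · refine eval_eq_zero_of_forall_tsum_eval_smul_eq_zero (hhom k) (hsum k Z hZ) (fun c hc => ?_) μ
    have hcZ : c • Z ∈ Metric.ball 0 r := balanced_ball_zero.smul_mem hc.le hZ
    exact (hvar _ hcZ).1 (smul_mem_closure_of_forall_smul_mem h0 hcone hZH c) k
  · have hall : ∀ μ, eval Z (P k μ) = 0 := hj₀ (RingHom.ker (eval Z)) hlow k
    simp [hall]
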